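/- Let H be a nonempty proper minor-closed graph class. Then obs(H^{(c)}) = conn(obs(H)); that is, a graph Y belongs to obs(H^{(c)}) if and only if Y is isomorphic to a minor-minimal element of the class C_H := { Y' : Y' ∈ conn(Z) for some Z ∈ obs(H) } (minor-minimal meaning that no proper minor of Y' is isomorphic to a member of C_H). (Proposition 12.1 / Lemma 12.9) -/

import Mathlib

open SimpleGraph

set_option autoImplicit false

/-- `H` is a minor of `G`: the standard branch-set (minor model) definition. -/
def SimpleGraph.IsMinorOf {W V : Type} (H : SimpleGraph W) (G : SimpleGraph V) : Prop :=
  ∃ φ : W → Set V,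
    (∀ w, (φ w).Nonempty) ∧
    (∀ w, (G.induce (φ w)).Connected) ∧
    (∀ w₁ w₂, w₁ ≠ w₂ → Disjoint (φ w₁) (φ w₂)) ∧
    (∀ w₁ w₂, H.Adj w₁ w₂ → ∃ v₁ ∈ φ w₁, ∃ v₂ ∈ φ w₂, G.Adj v₁ v₂)
section aux
variable {V W X : Type}

lemma connected_induce_singleton (G : SimpleGraph V) (v : V) :
    (G.induce {v}).Connected := by
  rw [connected_iff]
  refine ⟨fun a b => ?_, ⟨⟨v, rfl⟩⟩⟩
  obtain ⟨a, ha⟩ := a; obtain ⟨b, hb⟩ := b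
  simp only [Set.mem_singleton_iff] at ha hb
  subst ha; subst hb
  rfl

lemma isMinorOf_of_injHom {H : SimpleGraph W} {G : SimpleGraph V} (f : W → V)
    (hinj : Function.Injective f) (hadj : ∀ a b, H.Adj a b → G.Adj (f a) (f b)) :
    H.IsMinorOf G := by
  refine ⟨fun w => {f w}, fun w => ⟨f w, rfl⟩, fun w => connected_induce_singleton G (f w),
    ?_, ?_⟩
  · intro a b hab
    simp only [Set.disjoint_singleton_left, Set.mem_singleton_iff]
    exact fun h => hab (hinj h)
  · intro a b hab
    exact ⟨f a, rfl, f b, rfl, hadj a b hab⟩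

lemma isMinorOf_refl (G : SimpleGraph V) : G.IsMinorOf G :=
  isMinorOf_of_injHom id (fun _ _ h => h) (fun _ _ h => h)

lemma isMinorOf_of_le {H G : SimpleGraph V} (h : H ≤ G) : H.IsMinorOf G :=
  isMinorOf_of_injHom id (fun _ _ h => h) (fun a b hab => h hab)

lemma isMinorOf_of_iso {H : SimpleGraph W} {G : SimpleGraph V} (e : H ≃g G) :
    H.IsMinorOf G :=
  isMinorOf_of_injHom e e.injective (fun _ _ h => e.map_adj_iff.mpr h)

lemma connected_of_iso {H : SimpleGraph W} {G : SimpleGraph V} (e : H ≃g G)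
    (h : H.Connected) : G.Connected := by
  rw [connected_iff]
  refine ⟨fun a b => ?_, ⟨e h.nonempty.some⟩⟩
  have := h (e.symm a) (e.symm b)
  have := this.map e.toHom
  simpa using this
end aux

section unionconn
variable {V W : Type}

lemma induce_walk_union_connected (G : SimpleGraph V) (H : SimpleGraph W) (φ : W → Set V)
    (hne : ∀ w, (φ w).Nonempty) (hc : ∀ w, (G.induce (φ w)).Connected)
    (hadj : ∀ w₁ w₂, H.Adj w₁ w₂ → ∃ v₁ ∈ φ w₁, ∃ v₂ ∈ φ w₂, G.Adj v₁ v₂) :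
    ∀ {a b : W} (p : H.Walk a b), (G.induce (⋃ w ∈ {x | x ∈ p.support}, φ w)).Connected := by
  intro a b p
  induction p with
  | @nil u =>
    have : (⋃ w ∈ {x | x ∈ (Walk.nil : H.Walk u u).support}, φ w) = φ u := by
      ext v; simp
    rw [this]; exact hc u
  | @cons u c b h p ih =>
    have hset : {x | x ∈ (Walk.cons h p).support} = {u} ∪ {x | x ∈ p.support} := by
      ext x; simp [Walk.support_cons]
    rw [hset]
    have hsplit : (⋃ w ∈ ({u} ∪ {x | x ∈ p.support} : Set W), φ w)
        = φ u ∪ (⋃ w ∈ {x | x ∈ p.support}, φ w) := by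
      ext v; simp
    rw [hsplit]
    obtain ⟨v₁, hv₁, v₂, hv₂, hvadj⟩ := hadj u c h
    exact connected_induce_union (hc u).preconnected ih.preconnected hv₁
      (Set.mem_biUnion (by simp [Walk.start_mem_support]) hv₂) hvadj

lemma induce_biUnion_connected (G : SimpleGraph V) (H : SimpleGraph W) (φ : W → Set V)
    (s : Set W) (hs : (H.induce s).Connected)
    (hne : ∀ w, (φ w).Nonempty) (hc : ∀ w, (G.induce (φ w)).Connected)
    (hadj : ∀ w₁ w₂, H.Adj w₁ w₂ → ∃ v₁ ∈ φ w₁, ∃ v₂ ∈ φ w₂, G.Adj v₁ v₂) :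
    (G.induce (⋃ w ∈ s, φ w)).Connected := by
  obtain ⟨⟨w₀, hw₀⟩⟩ := hs.nonempty
  obtain ⟨v₀, hv₀⟩ := hne w₀
  apply G.induce_connected_of_patches v₀ (Set.mem_biUnion hw₀ hv₀)
  intro v hv
  obtain ⟨w, hw, hvw⟩ := Set.mem_iUnion₂.mp hv
  obtain ⟨q⟩ := hs.preconnected ⟨w₀, hw₀⟩ ⟨w, hw⟩
  let p : H.Walk w₀ w := q.map (SimpleGraph.Embedding.induce s).toHom
  have hsupp : {x | x ∈ p.support} ⊆ s := by
    intro x hx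
    change x ∈ (q.map (SimpleGraph.Embedding.induce s).toHom).support at hx
    rw [Walk.support_map, List.mem_map] at hx
    obtain ⟨⟨y, hy⟩, _, hyx⟩ := hx
    exact hyx ▸ hy
  refine ⟨(⋃ u ∈ {x | x ∈ p.support}, φ u), ?_, ?_, ?_, ?_⟩
  · exact Set.biUnion_subset_biUnion_left hsupp
  · exact Set.mem_biUnion (Walk.start_mem_support p) hv₀
  · exact Set.mem_biUnion (Walk.end_mem_support p) hvw
  · exact (induce_walk_union_connected G H φ hne hc hadj p).preconnected _ _

lemma SimpleGraph.IsMinorOf.trans {X : Type} {K : SimpleGraph X} {H : SimpleGraph W} {G : SimpleGraph V}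
    (h1 : K.IsMinorOf H) (h2 : H.IsMinorOf G) : K.IsMinorOf G := by
  obtain ⟨ψ, hψne, hψc, hψd, hψa⟩ := h1
  obtain ⟨φ, hφne, hφc, hφd, hφa⟩ := h2
  refine ⟨fun x => ⋃ w ∈ ψ x, φ w, ?_, ?_, ?_, ?_⟩
  · intro x
    obtain ⟨w, hw⟩ := hψne x
    obtain ⟨v, hv⟩ := hφne w
    exact ⟨v, Set.mem_biUnion hw hv⟩
  · intro x
    exact induce_biUnion_connected G H φ (ψ x) (hψc x) hφne hφc hφa
  · intro x₁ x₂ hx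
    rw [Set.disjoint_left]
    intro v hv₁ hv₂
    obtain ⟨w₁, hw₁, hvw₁⟩ := Set.mem_iUnion₂.mp hv₁
    obtain ⟨w₂, hw₂, hvw₂⟩ := Set.mem_iUnion₂.mp hv₂
    rcases eq_or_ne w₁ w₂ with rfl | hne'
    · exact (Set.disjoint_left.mp (hψd x₁ x₂ hx) hw₁) hw₂
    · exact (Set.disjoint_left.mp (hφd w₁ w₂ hne') hvw₁) hvw₂
  · intro x₁ x₂ hx
    obtain ⟨w₁, hw₁, w₂, hw₂, hwadj⟩ := hψa x₁ x₂ hx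
    obtain ⟨v₁, hv₁, v₂, hv₂, hvadj⟩ := hφa w₁ w₂ hwadj
    exact ⟨v₁, Set.mem_biUnion hw₁ hv₁, v₂, Set.mem_biUnion hw₂ hv₂, hvadj⟩
end unionconn

namespace SimpleGraph
section cards
variable {V W : Type}

lemma IsMinorOf.card_le [Finite V] {H : SimpleGraph W} {G : SimpleGraph V}
    (h : H.IsMinorOf G) : Nat.card W ≤ Nat.card V := by
  obtain ⟨φ, hne, -, hd, -⟩ := h
  set f : W → V := fun w => (hne w).some with hfdef
  have hf : ∀ w, f w ∈ φ w := fun w => (hne w).some_mem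
  apply Nat.card_le_card_of_injective f
  intro a b hab
  by_contra hne'
  exact (Set.disjoint_left.mp (hd a b hne') (hf a)) (hab ▸ hf b)

lemma IsMinorOf.finite {H : SimpleGraph W} {G : SimpleGraph V} [Finite V]
    (h : H.IsMinorOf G) : Finite W := by
  obtain ⟨φ, hne, -, hd, -⟩ := h
  set f : W → V := fun w => (hne w).some with hfdef
  have hf : ∀ w, f w ∈ φ w := fun w => (hne w).some_mem
  apply Finite.of_injective f
  intro a b hab
  by_contra hne'
  exact (Set.disjoint_left.mp (hd a b hne') (hf a)) (hab ▸ hf b)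

lemma IsMinorOf.exists_injHom_of_card_eq [Finite V] [Finite W]
    {H : SimpleGraph W} {G : SimpleGraph V} (h : H.IsMinorOf G)
    (hcard : Nat.card W = Nat.card V) :
    ∃ f : W → V, Function.Injective f ∧ ∀ a b, H.Adj a b → G.Adj (f a) (f b) := by
  obtain ⟨φ, hne, -, hd, ha⟩ := h
  set f : W → V := fun w => (hne w).some with hfdef
  have hf : ∀ w, f w ∈ φ w := fun w => (hne w).some_mem
  have hinj : Function.Injective f := by
    intro a b hab
    by_contra hne'
    exact (Set.disjoint_left.mp (hd a b hne') (hf a)) (hab ▸ hf b)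
  have hsingle : ∀ w, φ w = {f w} := by
    intro w₀
    by_contra hns
    have : ∃ y ∈ φ w₀, y ≠ f w₀ := by
      by_contra hy
      push_neg at hy
      exact hns (Set.eq_singleton_iff_unique_mem.mpr ⟨hf w₀, hy⟩)
    obtain ⟨y, hy, hyne⟩ := this
    have hι : Function.Injective (fun v : (Σ w, ↥(φ w)) => (v.2 : V)) := by
      rintro ⟨a, x, hx⟩ ⟨b, z, hz⟩ hxz
      simp only at hxz
      subst hxz
      rcases eq_or_ne a b with rfl | hab
      · rfl
      · exact absurd hz (Set.disjoint_left.mp (hd a b hab) hx)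
    haveI : Finite (Σ w, ↥(φ w)) := Finite.of_injective _ hι
    set j : W ⊕ Unit → Σ w, ↥(φ w) :=
      Sum.elim (fun w => (⟨w, f w, hf w⟩ : Σ w, ↥(φ w)))
        (fun _ : Unit => ⟨w₀, y, hy⟩) with hjdef
    have hj : Function.Injective j := by
      rintro (a | a) (b | b) hab
      · have h1 : a = b := congrArg Sigma.fst hab
        rw [h1]
      · exfalso
        have h1 : a = w₀ := congrArg Sigma.fst hab
        have h2 : f a = y := congrArg (fun p : Σ w, ↥(φ w) => (p.2 : V)) hab
        exact hyne (h1 ▸ h2.symm)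
      · exfalso
        have h1 : w₀ = b := congrArg Sigma.fst hab
        have h2 : y = f b := congrArg (fun p : Σ w, ↥(φ w) => (p.2 : V)) hab
        exact hyne (h1 ▸ h2)
      · rfl
    have h1 : Nat.card (W ⊕ Unit) ≤ Nat.card (Σ w, ↥(φ w)) :=
      Nat.card_le_card_of_injective _ hj
    have h2 : Nat.card (Σ w, ↥(φ w)) ≤ Nat.card V :=
      Nat.card_le_card_of_injective _ hι
    have h3 : Nat.card (W ⊕ Unit) = Nat.card W + 1 := by
      rw [Nat.card_sum]; simp
    omega
  refine ⟨f, hinj, fun a b hab => ?_⟩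
  obtain ⟨v₁, hv₁, v₂, hv₂, hvadj⟩ := ha a b hab
  rw [hsingle a, Set.mem_singleton_iff] at hv₁
  rw [hsingle b, Set.mem_singleton_iff] at hv₂
  rwa [← hv₁, ← hv₂]

lemma edgeCard_le_of_injHom [Finite V] {H : SimpleGraph W} {G : SimpleGraph V}
    (f : W → V) (hinj : Function.Injective f)
    (hadj : ∀ a b, H.Adj a b → G.Adj (f a) (f b)) :
    Nat.card H.edgeSet ≤ Nat.card G.edgeSet := by
  have hmap : ∀ e : H.edgeSet, Sym2.map f (e : Sym2 W) ∈ G.edgeSet := by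
    rintro ⟨e, he⟩
    induction e with
    | _ x y => exact hadj x y he
  apply Nat.card_le_card_of_injective
    (fun e : H.edgeSet => (⟨Sym2.map f (e : Sym2 W), hmap e⟩ : G.edgeSet))
  rintro ⟨e₁, h₁⟩ ⟨e₂, h₂⟩ he
  simp only [Subtype.mk.injEq] at he ⊢
  exact Sym2.map.injective hinj he

lemma iso_of_injHom_of_card_eq [Finite V] [Finite W] {H : SimpleGraph W} {G : SimpleGraph V}
    (f : W → V) (hfinj : Function.Injective f)
    (hfadj : ∀ a b, H.Adj a b → G.Adj (f a) (f b))
    (hcard : Nat.card W = Nat.card V)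
    (hecard : Nat.card H.edgeSet = Nat.card G.edgeSet) : Nonempty (H ≃g G) := by
  have hfbij : Function.Bijective f :=
    (Nat.bijective_iff_injective_and_card f).mpr ⟨hfinj, hcard⟩
  have hmap : ∀ e : H.edgeSet, Sym2.map f (e : Sym2 W) ∈ G.edgeSet := by
    rintro ⟨e, he⟩
    induction e with
    | _ x y => exact hfadj x y he
  have hebij : Function.Bijective
      (fun e : H.edgeSet => (⟨Sym2.map f (e : Sym2 W), hmap e⟩ : G.edgeSet)) := by
    apply (Nat.bijective_iff_injective_and_card _).mpr
    refine ⟨?_, hecard⟩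
    rintro ⟨e₁, h₁⟩ ⟨e₂, h₂⟩ he
    simp only [Subtype.mk.injEq] at he ⊢
    exact Sym2.map.injective hfinj he
  refine ⟨⟨Equiv.ofBijective f hfbij, ?_⟩⟩
  intro a b
  simp only [Equiv.ofBijective_apply]
  constructor
  · intro hGab
    obtain ⟨⟨e, he⟩, heq⟩ := hebij.2 ⟨s(f a, f b), hGab⟩
    simp only [Subtype.mk.injEq] at heq
    induction e with
    | _ x y =>
      replace heq : Sym2.map f s(x, y) = s(f a, f b) := congrArg Subtype.val heq
      rw [Sym2.map_pair_eq, Sym2.eq_iff] at heq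
      rcases heq with ⟨hx, hy⟩ | ⟨hx, hy⟩
      · rwa [hfinj hx, hfinj hy] at he
      · rw [hfinj hx, hfinj hy] at he
        exact he.symm
  · exact hfadj a b

lemma iso_of_mutual_minor [Finite V] [Finite W] {H : SimpleGraph W} {G : SimpleGraph V}
    (h1 : H.IsMinorOf G) (h2 : G.IsMinorOf H) : Nonempty (H ≃g G) := by
  have hcard : Nat.card W = Nat.card V := le_antisymm h1.card_le h2.card_le
  obtain ⟨f, hfinj, hfadj⟩ := h1.exists_injHom_of_card_eq hcard
  obtain ⟨g, hginj, hgadj⟩ := h2.exists_injHom_of_card_eq hcard.symm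
  have hecard : Nat.card H.edgeSet = Nat.card G.edgeSet :=
    le_antisymm (edgeCard_le_of_injHom f hfinj hfadj) (edgeCard_le_of_injHom g hginj hgadj)
  exact iso_of_injHom_of_card_eq f hfinj hfadj hcard hecard
end cards
end SimpleGraph

/-- A graph class: a (property of) simple graphs over all finite vertex types.
Closure under isomorphism is subsumed by minor-closedness below, since isomorphic
graphs are minors of each other. -/
abbrev GraphClass : Type 1 := ∀ (V : Type) [Finite V], SimpleGraph V → Prop

/-- The class `C` is minor-closed. -/
def MinorClosed (C : GraphClass) : Prop :=
  ∀ (V W : Type) [Finite V] [Finite W] (G : SimpleGraph V) (H : SimpleGraph W),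
    H.IsMinorOf G → C V G → C W H

/-- The class `C` is proper: it does not contain all graphs. -/
def ProperClass (C : GraphClass) : Prop :=
  ∃ (V : Type) (_ : Finite V) (G : SimpleGraph V), ¬ C V G

/-- The class `C` is nonempty. -/
def NonemptyClass (C : GraphClass) : Prop :=
  ∃ (V : Type) (_ : Finite V) (G : SimpleGraph V), C V G
/-- `Z` is an obstruction of the class `C`: `Z ∉ C`, and `Z` is minor-minimal with this
property, i.e. every minor of `Z` outside `C` has `Z` itself as a minor. -/
def IsObstruction (C : GraphClass) {W : Type} [Finite W] (Z : SimpleGraph W) : Prop :=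
  ¬ C W Z ∧
    ∀ (U : Type) [Finite U] (Y : SimpleGraph U), Y.IsMinorOf Z → ¬ C U Y → Z.IsMinorOf Y
/-- The class `C^(c)` of all graphs each of whose connected components belongs to `C`. -/
def ClosureOf (C : GraphClass) : GraphClass :=
  fun V _ G => ∀ J : G.ConnectedComponent, C ↥(J.supp) (G.induce J.supp)
/-- `Y ∈ conn(Z)`: `Y` is a connected graph on the vertex set of `Z` containing `Z` as a
spanning subgraph and edge-minimal with these properties. -/
def InConn {W : Type} (Z Y : SimpleGraph W) : Prop :=
  Z ≤ Y ∧ Y.Connected ∧ ∀ Y' : SimpleGraph W, Z ≤ Y' → Y' ≤ Y → Y'.Connected → Y' = Y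
/-- `Y` is isomorphic to a member of `C_H = ⋃ {conn(Z) : Z ∈ obs(C)}`. -/
def InCH (C : GraphClass) {U : Type} [Finite U] (Y : SimpleGraph U) : Prop :=
  ∃ (W : Type) (_ : Finite W) (Z Y' : SimpleGraph W),
    IsObstruction C Z ∧ InConn Z Y' ∧ Nonempty (Y ≃g Y')

section obstruction

lemma edgeCard_le_sq (V : Type) [Finite V] (G : SimpleGraph V) :
    Nat.card G.edgeSet ≤ Nat.card V * Nat.card V := by
  have h1 : Nat.card G.edgeSet ≤ Nat.card (Sym2 V) :=
    Nat.card_le_card_of_injective Subtype.val Subtype.val_injective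
  have h2 : Nat.card (Sym2 V) ≤ Nat.card (V × V) :=
    Nat.card_le_card_of_surjective (fun p : V × V => s(p.1, p.2)) (fun z => Sym2.ind (fun x y => ⟨(x, y), rfl⟩) z)
  rw [Nat.card_prod] at h2
  omega

lemma exists_obstruction_aux (C : GraphClass) (n : ℕ) :
    ∀ (V : Type) [Finite V] (G : SimpleGraph V),
      (Nat.card V)^3 + Nat.card G.edgeSet ≤ n → ¬ C V G →
      ∃ (W : Type) (_ : Finite W) (Z : SimpleGraph W),
        IsObstruction C Z ∧ Z.IsMinorOf G := by
  induction n using Nat.strong_induction_on with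
  | _ n IH =>
    intro V _ G hm hnc
    by_cases hobs : IsObstruction C G
    · exact ⟨V, ‹_›, G, hobs, isMinorOf_refl G⟩
    · have hB : ¬ ∀ (U : Type) [Finite U] (Y : SimpleGraph U),
          Y.IsMinorOf G → ¬ C U Y → G.IsMinorOf Y := fun hb => hobs ⟨hnc, hb⟩
      push_neg at hB
      obtain ⟨U, instU, Y, hYm, hYnc, hYnm⟩ := hB
      -- measure decreases
      have hcardle : Nat.card U ≤ Nat.card V := hYm.card_le
      have hdec : (Nat.card U)^3 + Nat.card Y.edgeSet < (Nat.card V)^3 + Nat.card G.edgeSet := by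
        rcases lt_or_eq_of_le hcardle with hlt | heq
        · have h1 : Nat.card Y.edgeSet ≤ Nat.card U * Nat.card U := edgeCard_le_sq U Y
          have h2 : Nat.card U + 1 ≤ Nat.card V := hlt
          have h3 : (Nat.card U + 1)^3 ≤ (Nat.card V)^3 := Nat.pow_le_pow_left h2 3
          nlinarith [h1, h3]
        · obtain ⟨f, hfinj, hfadj⟩ := hYm.exists_injHom_of_card_eq heq
          have hele : Nat.card Y.edgeSet ≤ Nat.card G.edgeSet :=
            edgeCard_le_of_injHom f hfinj hfadj
          rcases lt_or_eq_of_le hele with hlt' | heq'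
          · rw [heq]; omega
          · exfalso
            obtain ⟨e⟩ : Nonempty (Y ≃g G) :=
              SimpleGraph.iso_of_injHom_of_card_eq f hfinj hfadj heq heq'
            exact hYnm (isMinorOf_of_iso e.symm)
      obtain ⟨W, instW, Z, hZobs, hZm⟩ :=
        IH ((Nat.card U)^3 + Nat.card Y.edgeSet) (by omega) U Y (le_refl _) hYnc
      exact ⟨W, instW, Z, hZobs, hZm.trans hYm⟩
end obstruction

section conn
variable {V W : Type}

lemma exists_obstruction (C : GraphClass) {V : Type} [Finite V] {G : SimpleGraph V}
    (hnc : ¬ C V G) :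
    ∃ (W : Type) (_ : Finite W) (Z : SimpleGraph W), IsObstruction C Z ∧ Z.IsMinorOf G :=
  exists_obstruction_aux C ((Nat.card V)^3 + Nat.card G.edgeSet) V G (le_refl _) hnc

lemma walk_exists_boundary {G : SimpleGraph V} {S : Set V} :
    ∀ {a b : V} (_ : G.Walk a b), a ∈ S → b ∉ S → ∃ x ∈ S, ∃ y, y ∉ S ∧ G.Adj x y := by
  intro a b p
  induction p with
  | nil => intro ha hb; exact absurd ha hb
  | @cons u c b h p ih =>
    intro ha hb
    by_cases hc : c ∈ S
    · exact ih hc hb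
    · exact ⟨u, ha, c, hc, h⟩

lemma absorb (G : SimpleGraph V) [Finite V] [Nonempty W] (hG : G.Connected) :
    ∀ (n : ℕ) (φ : W → Set V), (Set.univ \ ⋃ w, φ w).ncard ≤ n →
    (∀ w, (φ w).Nonempty) → (∀ w, (G.induce (φ w)).Connected) →
    (∀ w₁ w₂, w₁ ≠ w₂ → Disjoint (φ w₁) (φ w₂)) →
    ∃ ψ : W → Set V, (∀ w, φ w ⊆ ψ w) ∧ (∀ w, (ψ w).Nonempty) ∧
      (∀ w, (G.induce (ψ w)).Connected) ∧
      (∀ w₁ w₂, w₁ ≠ w₂ → Disjoint (ψ w₁) (ψ w₂)) ∧ (⋃ w, ψ w) = Set.univ := by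
  intro n
  induction n with
  | zero =>
    intro φ hcard hne hc hd
    refine ⟨φ, fun w => le_refl _, hne, hc, hd, ?_⟩
    have : (Set.univ \ ⋃ w, φ w) = ∅ := by
      have hfin : (Set.univ \ ⋃ w, φ w).Finite := Set.toFinite _
      rwa [Nat.le_zero, Set.ncard_eq_zero hfin] at hcard
    rw [Set.diff_eq_empty] at this
    exact le_antisymm (Set.subset_univ _) this
  | succ n ih =>
    intro φ hcard hne hc hd
    by_cases hcov : (⋃ w, φ w) = Set.univ
    · exact ⟨φ, fun w => le_refl _, hne, hc, hd, hcov⟩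
    · have hex : ∃ v, v ∉ ⋃ w, φ w := by
        by_contra hno
        push_neg at hno
        exact hcov (le_antisymm (Set.subset_univ _) (fun v _ => hno v))
      obtain ⟨v, hv⟩ := hex
      obtain ⟨s₀, hs₀⟩ := hne (Classical.arbitrary W)
      have hs₀' : s₀ ∈ ⋃ w, φ w := Set.mem_iUnion.mpr ⟨_, hs₀⟩
      obtain ⟨p⟩ := hG s₀ v
      obtain ⟨x, hx, y, hy, hxy⟩ := walk_exists_boundary p hs₀' hv
      obtain ⟨w₀, hw₀⟩ := Set.mem_iUnion.mp hx
      classical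
      set φ' : W → Set V := Function.update φ w₀ (insert y (φ w₀)) with hφ'def
      have hφ'w₀ : φ' w₀ = insert y (φ w₀) := Function.update_self _ _ _
      have hφ'ne : ∀ w, w ≠ w₀ → φ' w = φ w := fun w hw => Function.update_of_ne hw _ _
      have hUnion : (⋃ w, φ' w) = insert y (⋃ w, φ w) := by
        ext z
        simp only [Set.mem_iUnion, Set.mem_insert_iff]
        constructor
        · rintro ⟨w, hz⟩
          rcases eq_or_ne w w₀ with hww | hw
          · rw [hww, hφ'w₀] at hz
            rcases hz with rfl | hz
            · exact Or.inl rfl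
            · exact Or.inr ⟨w₀, hz⟩
          · rw [hφ'ne w hw] at hz
            exact Or.inr ⟨w, hz⟩
        · rintro (rfl | ⟨w, hz⟩)
          · exact ⟨w₀, by rw [hφ'w₀]; exact Set.mem_insert _ _⟩
          · rcases eq_or_ne w w₀ with hww | hw
            · exact ⟨w₀, by rw [hφ'w₀]; exact Set.mem_insert_of_mem _ (hww ▸ hz)⟩
            · exact ⟨w, by rw [hφ'ne w hw]; exact hz⟩
      have hcard' : (Set.univ \ ⋃ w, φ' w).ncard ≤ n := by
        rw [hUnion]
        have h1 : (Set.univ \ insert y (⋃ w, φ w)) = (Set.univ \ ⋃ w, φ w) \ {y} := by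
          ext z; simp only [Set.mem_diff, Set.mem_insert_iff, Set.mem_univ, true_and,
            Set.mem_singleton_iff]
          tauto
        rw [h1]
        have h2 : (Set.univ \ ⋃ w, φ w) \ {y} ⊂ (Set.univ \ ⋃ w, φ w) := by
          refine (Set.sdiff_singleton_ssubset).mpr ⟨Set.mem_univ _, hy⟩
        have h3 := Set.ncard_lt_ncard h2 (Set.toFinite _)
        omega
      have hne' : ∀ w, (φ' w).Nonempty := by
        intro w
        rcases eq_or_ne w w₀ with hww | hw
        · rw [hww, hφ'w₀]; exact Set.insert_nonempty _ _
        · rw [hφ'ne w hw]; exact hne w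
      have hc' : ∀ w, (G.induce (φ' w)).Connected := by
        intro w
        rcases eq_or_ne w w₀ with hww | hw
        · rw [hww, hφ'w₀, ← Set.union_singleton]
          exact connected_induce_union (hc w₀).preconnected (connected_induce_singleton G y).preconnected
            hw₀ rfl hxy
        · rw [hφ'ne w hw]; exact hc w
      have hd' : ∀ w₁ w₂, w₁ ≠ w₂ → Disjoint (φ' w₁) (φ' w₂) := by
        intro w₁ w₂ hw
        have hyout : ∀ w, y ∉ φ w := fun w hyw => hy (Set.mem_iUnion.mpr ⟨w, hyw⟩)
        rcases eq_or_ne w₁ w₀ with h1 | h1 <;> rcases eq_or_ne w₂ w₀ with h2 | h2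
        · exact absurd (h1.trans h2.symm) hw
        · rw [h1, hφ'w₀, hφ'ne w₂ h2, Set.disjoint_left]
          rintro z (rfl | hz)
          · exact fun hzw => hyout w₂ hzw
          · exact fun hzw => Set.disjoint_left.mp (hd w₀ w₂ (fun hq => h2 hq.symm)) hz hzw
        · rw [h2, hφ'ne w₁ h1, hφ'w₀, Set.disjoint_right]
          rintro z (rfl | hz)
          · exact fun hzw => hyout w₁ hzw
          · exact fun hzw => Set.disjoint_right.mp (hd w₁ w₀ h1) hz hzw
        · rw [hφ'ne w₁ h1, hφ'ne w₂ h2]; exact hd _ _ hw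
      obtain ⟨ψ, hsub, h1, h2, h3, h4⟩ := ih φ' hcard' hne' hc' hd'
      refine ⟨ψ, fun w => ?_, h1, h2, h3, h4⟩
      rcases eq_or_ne w w₀ with hww | hw
      · rw [hww]
        exact (Set.subset_insert _ _).trans (hφ'w₀ ▸ hsub w₀)
      · exact (hφ'ne w hw) ▸ hsub w
end conn
section connmain
variable {V W : Type}

/-- Edge-minimization: below any connected `Y ≥ Z` there is an edge-minimal one. -/
lemma exists_inConn_le [Finite W] (Z : SimpleGraph W) (n : ℕ) :
    ∀ (Y : SimpleGraph W), Nat.card Y.edgeSet ≤ n → Z ≤ Y → Y.Connected →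
    ∃ Y', InConn Z Y' ∧ Y' ≤ Y := by
  induction n using Nat.strong_induction_on with
  | _ n IH =>
    intro Y hcard hZY hconn
    by_cases hmin : ∀ Y'' : SimpleGraph W, Z ≤ Y'' → Y'' ≤ Y → Y''.Connected → Y'' = Y
    · exact ⟨Y, ⟨hZY, hconn, hmin⟩, le_refl _⟩
    · push_neg at hmin
      obtain ⟨Y'', hZY'', hY''Y, hY''conn, hY''ne⟩ := hmin
      have hss : Y''.edgeSet ⊂ Y.edgeSet := by
        refine ⟨edgeSet_mono hY''Y, fun hsub => hY''ne ?_⟩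
        apply edgeSet_injective
        exact le_antisymm (edgeSet_mono hY''Y) hsub
      have hlt : Nat.card Y''.edgeSet < Nat.card Y.edgeSet := by
        rw [Nat.card_coe_set_eq, Nat.card_coe_set_eq]
        exact Set.ncard_lt_ncard hss (Set.toFinite _)
      obtain ⟨Y', hY', hle⟩ :=
        IH (Nat.card Y''.edgeSet) (by omega) Y'' (le_refl _) hZY'' hY''conn
      exact ⟨Y', hY', hle.trans hY''Y⟩

/-- If `Z` is a minor of a connected graph `G`, then some member of `conn(Z)` is a
minor of `G`. -/
lemma exists_inConn_minor [Finite V] [Finite W] [Nonempty W]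
    {Z : SimpleGraph W} {G : SimpleGraph V}
    (hm : Z.IsMinorOf G) (hG : G.Connected) :
    ∃ Y' : SimpleGraph W, InConn Z Y' ∧ Y'.IsMinorOf G := by
  obtain ⟨φ, hne, hc, hd, ha⟩ := hm
  obtain ⟨ψ, hsub, hψne, hψc, hψd, hψcov⟩ :=
    absorb G hG ((Set.univ \ ⋃ w, φ w).ncard) φ (le_refl _) hne hc hd
  classical
  -- the contracted graph
  set Zp : SimpleGraph W :=
    { Adj := fun w₁ w₂ => w₁ ≠ w₂ ∧ ∃ v₁ ∈ ψ w₁, ∃ v₂ ∈ ψ w₂, G.Adj v₁ v₂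
      symm := by
        constructor
        rintro w₁ w₂ ⟨hne', v₁, hv₁, v₂, hv₂, hadj⟩
        exact ⟨hne'.symm, v₂, hv₂, v₁, hv₁, hadj.symm⟩
      loopless := ⟨fun w h => h.1 rfl⟩ } with hZpdef
  have hZZp : Z ≤ Zp := by
    intro a b hab
    obtain ⟨v₁, hv₁, v₂, hv₂, hadj⟩ := ha a b hab
    exact ⟨hab.ne, v₁, hsub a hv₁, v₂, hsub b hv₂, hadj⟩
  -- the index function
  have hidx : ∀ v : V, ∃ w, v ∈ ψ w := by
    intro v
    have : v ∈ ⋃ w, ψ w := hψcov ▸ Set.mem_univ v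
    exact Set.mem_iUnion.mp this
  set f : V → W := fun v => (hidx v).choose with hfdef
  have hf : ∀ v, v ∈ ψ (f v) := fun v => (hidx v).choose_spec
  have hfuniq : ∀ v w, v ∈ ψ w → f v = w := by
    intro v w hvw
    by_contra hne'
    exact Set.disjoint_left.mp (hψd _ _ hne') (hf v) hvw
  have hZpconn : Zp.Connected := by
    rw [connected_iff]
    refine ⟨fun w₁ w₂ => ?_, ‹Nonempty W›⟩
    obtain ⟨v₁, hv₁⟩ := hψne w₁
    obtain ⟨v₂, hv₂⟩ := hψne w₂
    rw [← hfuniq v₁ w₁ hv₁, ← hfuniq v₂ w₂ hv₂]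
    obtain ⟨p⟩ := hG v₁ v₂
    clear hv₁ hv₂
    induction p with
    | nil => exact Reachable.refl _
    | @cons u c b h p ih =>
      rcases eq_or_ne (f u) (f c) with heq | hne'
      · rw [heq]; exact ih
      · have hadj : Zp.Adj (f u) (f c) := ⟨hne', u, hf u, c, hf c, h⟩
        exact hadj.reachable.trans ih
  have hZpm : Zp.IsMinorOf G := by
    refine ⟨ψ, hψne, hψc, hψd, ?_⟩
    rintro w₁ w₂ ⟨-, hw⟩
    exact hw
  obtain ⟨Y', hY', hle⟩ :=
    exists_inConn_le Z (Nat.card Zp.edgeSet) Zp (le_refl _) hZZp hZpconn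
  exact ⟨Y', hY', (isMinorOf_of_le hle).trans hZpm⟩
end connmain

section comps
variable {V : Type}

lemma induce_supp_connected (G : SimpleGraph V) (J : G.ConnectedComponent) :
    (G.induce J.supp).Connected := by
  classical
  obtain ⟨u, hu0⟩ := J.exists_rep
  have hu : G.connectedComponentMk u = J := hu0
  have hu' : u ∈ J.supp := by rw [ConnectedComponent.mem_supp_iff, hu]
  apply G.induce_connected_of_patches u hu'
  intro v hv
  have hreach : G.Reachable u v := by
    rw [ConnectedComponent.mem_supp_iff] at hv
    have h2 : G.connectedComponentMk u = G.connectedComponentMk v := by rw [hu, hv]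
    exact (ConnectedComponent.eq).mp h2
  obtain ⟨p⟩ := hreach
  refine ⟨{x | x ∈ p.support}, ?_, p.start_mem_support, p.end_mem_support, ?_⟩
  · intro x hx
    rw [Set.mem_setOf_eq] at hx
    have h3 : G.Reachable x u := Reachable.symm ⟨p.takeUntil x hx⟩
    have h4 : G.connectedComponentMk x = G.connectedComponentMk u :=
      ConnectedComponent.eq.mpr h3
    rw [ConnectedComponent.mem_supp_iff, h4, hu]
  · exact (p.connected_induce_support).preconnected _ _

lemma supp_eq_univ_of_connected {G : SimpleGraph V} (h : G.Connected)
    (J : G.ConnectedComponent) : J.supp = Set.univ := by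
  obtain ⟨u, hu0⟩ := J.exists_rep
  have hu : G.connectedComponentMk u = J := hu0
  apply Set.eq_univ_of_forall
  intro v
  rw [ConnectedComponent.mem_supp_iff, ← hu, ConnectedComponent.eq]
  exact h v u

/-- A connected graph not in a minor-closed class is not in the closure either. -/
lemma closure_not_mem {C : GraphClass} (hmc : MinorClosed C) {U : Type} [Finite U]
    {Y : SimpleGraph U} (hconn : Y.Connected) (hnC : ¬ C U Y) : ¬ ClosureOf C U Y := by
  intro hcl
  obtain ⟨v⟩ := hconn.nonempty
  set J := Y.connectedComponentMk v with hJ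
  have hsupp : J.supp = Set.univ := supp_eq_univ_of_connected hconn J
  have hCJ := hcl J
  have hYm : Y.IsMinorOf (Y.induce J.supp) := by
    refine isMinorOf_of_injHom (fun u => ⟨u, by rw [hsupp]; trivial⟩) ?_ ?_
    · intro a b hab
      exact congrArg Subtype.val hab
    · intro a b hab
      exact hab
  exact hnC (hmc _ _ _ _ hYm hCJ)

/-- obstructions have nonempty vertex type when the class is nonempty. -/
lemma obstruction_nonempty {C : GraphClass} (hne : NonemptyClass C) (hmc : MinorClosed C)
    {W : Type} [Finite W] {Z : SimpleGraph W} (hZ : IsObstruction C Z) : Nonempty W := by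
  by_contra hempty
  rw [not_nonempty_iff] at hempty
  obtain ⟨V₀, iV₀, G₀, hG₀⟩ := hne
  have hm : Z.IsMinorOf G₀ := by
    refine ⟨fun w => isEmptyElim w, fun w => isEmptyElim w, fun w => isEmptyElim w,
      fun w₁ w₂ _ => isEmptyElim w₁, fun w₁ w₂ _ => isEmptyElim w₁⟩
  exact hZ.1 (hmc _ _ _ _ hm hG₀)

lemma minor_induce_supp {U : Type} (Y : SimpleGraph U) (s : Set U) :
    (Y.induce s).IsMinorOf Y :=
  isMinorOf_of_injHom (Subtype.val) Subtype.val_injective (fun a b hab => hab)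
end comps

/-- **Proposition 12.1 / Lemma 12.9.** Let `C` be a nonempty proper minor-closed class.
Then `obs(C^(c)) = conn(obs(C))`: a graph `Y` is an obstruction of `C^(c)` iff `Y` is
(isomorphic to) a member of `C_H = ⋃ {conn(Z) : Z ∈ obs(C)}` which is minor-minimal in
`C_H`, i.e. every minor of `Y` lying in `C_H` has `Y` itself as a minor. -/
theorem obs_closure_eq_conn_obs (C : GraphClass)
    (hne : NonemptyClass C) (hmc : MinorClosed C) (hproper : ProperClass C)
    (U : Type) [Finite U] (Y : SimpleGraph U) :
    IsObstruction (ClosureOf C) Y ↔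
      (InCH C Y ∧ ∀ (U' : Type) [Finite U'] (Y₂ : SimpleGraph U'),
        Y₂.IsMinorOf Y → InCH C Y₂ → Y.IsMinorOf Y₂) := by
  constructor
  · rintro ⟨hnotin, hminimal⟩
    have hUne : Nonempty U := by
      by_contra hUe
      rw [not_nonempty_iff] at hUe
      exact hnotin (fun J => J.ind (fun v => isEmptyElim v))
    have h0 : ¬ ∀ J : Y.ConnectedComponent, C ↥(J.supp) (Y.induce J.supp) := hnotin
    push_neg at h0
    obtain ⟨J, hJbad⟩ := h0
    have hJconn := induce_supp_connected Y J
    have hJncl : ¬ ClosureOf C ↥(J.supp) (Y.induce J.supp) :=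
      closure_not_mem hmc hJconn hJbad
    have hJmin : (Y.induce J.supp).IsMinorOf Y := minor_induce_supp Y J.supp
    have hYmJ : Y.IsMinorOf (Y.induce J.supp) := hminimal _ _ hJmin hJncl
    have hYconn : Y.Connected := by
      rw [connected_iff]
      refine ⟨?_, hUne⟩
      intro u v
      by_contra hreach
      have hJne : J.supp ≠ Set.univ := by
        intro hsupp
        have hu : u ∈ J.supp := hsupp ▸ Set.mem_univ u
        have hv : v ∈ J.supp := hsupp ▸ Set.mem_univ v
        rw [ConnectedComponent.mem_supp_iff] at hu hv
        exact hreach (ConnectedComponent.eq.mp (hu.trans hv.symm))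
      have hlt : Nat.card ↥(J.supp) < Nat.card U := by
        have hss : J.supp ⊂ Set.univ := Set.ssubset_univ_iff.mpr hJne
        rw [Nat.card_coe_set_eq]
        have h5 := Set.ncard_lt_ncard hss (Set.toFinite _)
        rwa [Set.ncard_univ] at h5
      exact absurd hYmJ.card_le (by omega)
    have hYnC : ¬ C U Y := fun hCY => hJbad (hmc _ _ _ _ hJmin hCY)
    obtain ⟨W, instW, Z, hZobs, hZm⟩ := exists_obstruction C hYnC
    haveI := instW
    haveI : Nonempty W := obstruction_nonempty hne hmc hZobs
    obtain ⟨Y', hY'conn, hY'm⟩ := exists_inConn_minor hZm hYconn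
    have hY'nC : ¬ C W Y' := fun hCY' =>
      hZobs.1 (hmc _ _ _ _ (isMinorOf_of_le hY'conn.1) hCY')
    have hY'ncl : ¬ ClosureOf C W Y' := closure_not_mem hmc hY'conn.2.1 hY'nC
    have hYmY' : Y.IsMinorOf Y' := hminimal _ _ hY'm hY'ncl
    obtain ⟨e⟩ := SimpleGraph.iso_of_mutual_minor hYmY' hY'm
    refine ⟨⟨W, instW, Z, Y', hZobs, hY'conn, ⟨e⟩⟩, ?_⟩
    intro U' instU' Y₂ hm2 hInCH2
    obtain ⟨W₂, iW₂, Z₂, Y₂', obs₂, conn₂, ⟨e₂⟩⟩ := hInCH2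
    have hY₂conn : Y₂.Connected := connected_of_iso e₂.symm conn₂.2.1
    have hY₂nC : ¬ C U' Y₂ := by
      intro hC
      have hZ₂m : Z₂.IsMinorOf Y₂ :=
        (isMinorOf_of_le conn₂.1).trans (isMinorOf_of_iso e₂.symm)
      exact obs₂.1 (hmc _ _ _ _ hZ₂m hC)
    exact hminimal _ _ hm2 (closure_not_mem hmc hY₂conn hY₂nC)
  · rintro ⟨⟨W, instW, Z, Y', hZobs, hY'conn, ⟨e⟩⟩, hmin⟩
    haveI := instW
    have hYconn : Y.Connected := connected_of_iso e.symm hY'conn.2.1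
    have hYnC : ¬ C U Y := by
      intro hC
      have hZm : Z.IsMinorOf Y :=
        (isMinorOf_of_le hY'conn.1).trans (isMinorOf_of_iso e.symm)
      exact hZobs.1 (hmc _ _ _ _ hZm hC)
    refine ⟨closure_not_mem hmc hYconn hYnC, ?_⟩
    intro U' instU' Y₂ hm2 hncl
    have h0 : ¬ ∀ J : Y₂.ConnectedComponent, C ↥(J.supp) (Y₂.induce J.supp) := hncl
    push_neg at h0
    obtain ⟨J, hJbad⟩ := h0
    have hJconn := induce_supp_connected Y₂ J
    obtain ⟨W', iW', Z', hZ'obs, hZ'm⟩ := exists_obstruction C hJbad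
    haveI := iW'
    haveI : Nonempty W' := obstruction_nonempty hne hmc hZ'obs
    obtain ⟨Y₃, hY₃conn, hY₃m⟩ := exists_inConn_minor hZ'm hJconn
    have hInCH₃ : InCH C Y₃ := ⟨W', iW', Z', Y₃, hZ'obs, hY₃conn, ⟨(Iso.refl : Y₃ ≃g Y₃)⟩⟩
    have hY₃mY : Y₃.IsMinorOf Y :=
      (hY₃m.trans (minor_induce_supp Y₂ J.supp)).trans hm2
    have hYmY₃ : Y.IsMinorOf Y₃ := hmin _ Y₃ hY₃mY hInCH₃
    exact hYmY₃.trans (hY₃m.trans (minor_induce_supp Y₂ J.supp))
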